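/- arXiv:2212.05555 — 3 statements merged into one kernel-verified Lean document; each statement's English description precedes it below -/
import Mathlib

section
/- Define M₀(z) = e^z and, for k ≥ 1, M_k(z) = (e^z − Σ_{j=0}^{k-1} z^j/j!)/z^k for z ≠ 0 (extended analytically by M_k(0) = 1/k!). Then for every k ∈ ℕ and every complex z with Re(z) ≤ 0, |M_k(z)| ≤ 1/k!. -/
open Complex

/-!
Termwise integration of the series gives `M_{k+1}(z) = ∫₀¹ tᵏ M_k(tz) dt`, the integrated form of
`d/dz [z^{k+1} M_{k+1}(z)] = zᵏ M_k(z)`. Since `Re(tz) ≤ 0` for `t ∈ [0, 1]`, the bound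
`|M_k| ≤ 1/k!` propagates from `|M_0(tz)| = |e^{tz}| ≤ 1` by induction, as `∫₀¹ tᵏ/k! dt = 1/(k+1)!`.
-/

/-- The entire function `M_k(z) = Σ_{j=0}^∞ z^j/(j+k)!`, which for `z ≠ 0` equals
`(e^z − Σ_{j<k} z^j/j!)/z^k`, with `M_k(0) = 1/k!` and `M₀ = exp`. -/
noncomputable def Mfun (k : ℕ) (z : ℂ) : ℂ :=
  ∑' j : ℕ, z ^ j / (Nat.factorial (j + k))

lemma norm_pow_div_factorial_add_le (z : ℂ) (j k : ℕ) :
    ‖z ^ j / ((j + k).factorial : ℂ)‖ ≤ ‖z‖ ^ j / j.factorial := by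
  rw [norm_div, norm_pow, norm_natCast]
  gcongr
  exact Nat.le_add_right j k

lemma hasSum_Mfun (k : ℕ) (z : ℂ) :
    HasSum (fun j : ℕ => z ^ j / ((j + k).factorial : ℂ)) (Mfun k z) :=
  (Summable.of_norm_bounded (Real.summable_pow_div_factorial ‖z‖)
    (norm_pow_div_factorial_add_le z · k)).hasSum

lemma Mfun_zero (z : ℂ) : Mfun 0 z = exp z := by
  simp only [Mfun, Nat.add_zero, exp_eq_exp_ℂ, NormedSpace.exp_eq_tsum_div]

lemma integral_ofReal_pow (n : ℕ) : ∫ t in (0 : ℝ)..1, (t : ℂ) ^ n = 1 / ((n : ℂ) + 1) := by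
  simp_rw [← ofReal_pow]
  rw [intervalIntegral.integral_ofReal, integral_pow]
  push_cast
  ring

lemma integral_pow_mul_pow_div_factorial (k j : ℕ) (z : ℂ) :
    ∫ t in (0 : ℝ)..1, (t : ℂ) ^ k * ((t * z) ^ j / ((j + k).factorial : ℂ))
      = z ^ j / ((j + (k + 1)).factorial : ℂ) := by
  calc ∫ t in (0 : ℝ)..1, (t : ℂ) ^ k * ((t * z) ^ j / ((j + k).factorial : ℂ))
      = (∫ t in (0 : ℝ)..1, (t : ℂ) ^ (j + k)) * (z ^ j / ((j + k).factorial : ℂ)) := by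
        rw [← intervalIntegral.integral_mul_const]
        congr 1 with t
        ring
    _ = z ^ j / ((j + (k + 1)).factorial : ℂ) := by
        rw [integral_ofReal_pow, ← add_assoc, Nat.factorial_succ]
        push_cast
        field_simp

lemma Mfun_succ_eq_integral (k : ℕ) (z : ℂ) :
    Mfun (k + 1) z = ∫ t in (0 : ℝ)..1, (t : ℂ) ^ k * Mfun k (t * z) := by
  refine (hasSum_Mfun (k + 1) z).unique ?_
  simp only [← integral_pow_mul_pow_div_factorial]
  refine intervalIntegral.hasSum_integral_of_dominated_convergence
    (fun j _ => ‖z‖ ^ j / j.factorial) (fun j => by fun_prop) (fun j => .of_forall fun t ht => ?_)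
    (.of_forall fun _ _ => Real.summable_pow_div_factorial ‖z‖) intervalIntegrable_const
    (.of_forall fun t _ => (hasSum_Mfun k (t * z)).mul_left _)
  rw [Set.uIoc_of_le zero_le_one] at ht
  have ht_norm : ‖(t : ℂ)‖ ≤ 1 := by
    rw [norm_real, Real.norm_of_nonneg ht.1.le]
    exact ht.2
  calc ‖(t : ℂ) ^ k * ((t * z) ^ j / ((j + k).factorial : ℂ))‖
      ≤ 1 * (‖(t : ℂ) * z‖ ^ j / j.factorial) := by
        rw [norm_mul, norm_pow]
        gcongr
        · exact pow_le_one₀ (norm_nonneg _) ht_norm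
        · exact norm_pow_div_factorial_add_le _ j k
    _ ≤ ‖z‖ ^ j / j.factorial := by
        rw [one_mul, norm_mul]
        gcongr
        exact mul_le_of_le_one_left (norm_nonneg z) ht_norm

lemma norm_integral_pow_mul_le {f : ℝ → ℂ} {C : ℝ} (k : ℕ)
    (hC : ∀ t ∈ Set.Ioc (0 : ℝ) 1, ‖f t‖ ≤ C) :
    ‖∫ t in (0 : ℝ)..1, (t : ℂ) ^ k * f t‖ ≤ C / (k + 1) := by
  calc ‖∫ t in (0 : ℝ)..1, (t : ℂ) ^ k * f t‖ ≤ ∫ t in (0 : ℝ)..1, t ^ k * C := by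
        refine intervalIntegral.norm_integral_le_of_norm_le zero_le_one
          (.of_forall fun t ht => ?_) (by apply Continuous.intervalIntegrable; fun_prop)
        rw [norm_mul, norm_pow, norm_real, Real.norm_of_nonneg ht.1.le]
        exact mul_le_mul_of_nonneg_left (hC t ht) (pow_nonneg ht.1.le k)
    _ = C / (k + 1) := by
        rw [intervalIntegral.integral_mul_const, integral_pow]
        ring

/-- For every `k ∈ ℕ` and complex `z` with `Re(z) ≤ 0`, `|M_k(z)| ≤ 1/k!`. -/
theorem Mfun_bound (k : ℕ) (z : ℂ) (hz : z.re ≤ 0) :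
    ‖Mfun k z‖ ≤ 1 / (Nat.factorial k) := by
  induction k generalizing z with
  | zero => simpa [Mfun_zero, norm_exp] using hz
  | succ k ih =>
    rw [Mfun_succ_eq_integral]
    refine (norm_integral_pow_mul_le k fun t ht => ih _ ?_).trans_eq ?_
    · simpa [re_ofReal_mul] using mul_nonpos_of_nonneg_of_nonpos ht.1.le hz
    · rw [Nat.factorial_succ]
      push_cast
      field_simp
end

section
/- For α ∈ (0,2) and n ∈ ℕ, the bivariate spherically contoured α-stable radial density f(r;α) = (1/(2π))∫₀^∞ J₀(rt) t e^{-t^α} dt satisfies f(r;α) = (1/(2πα)) Σ_{k=0}^{n} (−1)^k Γ((2k+2)/α)/((2^k k!)²) · r^{2k} + R(r;α), with |R(r;α)| ≤ Γ((2n+4)/α)/(2πα·(2n+2)!) · r^{2n+2} for all r ≥ 0. -/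
open MeasureTheory Real

/-- The Bessel function of the first kind of integer order `ν`. -/
noncomputable def besselJ (ν : ℕ) (x : ℝ) : ℝ :=
  ∑' k : ℕ, (-1 : ℝ) ^ k / (Nat.factorial k * Nat.factorial (k + ν)) * (x / 2) ^ (2 * k + ν)

/-- The radial density of the spherically contoured bivariate α-stable law:
`f(r;α) = (1/(2π)) ∫₀^∞ J₀(rt) t e^{-t^α} dt`. -/
noncomputable def bivariateStablePdf (r α : ℝ) : ℝ :=
  (1 / (2 * π)) * ∫ t in Set.Ioi (0:ℝ), besselJ 0 (r * t) * t * Real.exp (-(t ^ α))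

/-!
Integrating the cosine series termwise against Wallis' integrals gives Poisson's formula
`π J₀(x) = ∫₀^π cos (x sin θ) dθ`. Through it, the alternating Taylor bound
`|cos u - ∑_{k<m} (-1)^k u^{2k}/(2k)!| ≤ u^{2m}/(2m)!` for `u ≥ 0`, obtained from `|cos| ≤ 1` by
integrating twice per step, becomes the same bound for `J₀` and its Maclaurin partial sums. Against
the weight `t e^{-t^α}` the partial sum integrates termwise to Gamma values,
`∫₀^∞ t^{2k+1} e^{-t^α} dt = Γ((2k+2)/α)/α`, and the remainder to at most
`r^{2m}/(2m)! · Γ((2m+2)/α)/α`.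
-/

open scoped Nat

noncomputable section

def cosTaylor (m : ℕ) (u : ℝ) : ℝ :=
  ∑ k ∈ Finset.range m, (-1) ^ k * u ^ (2 * k) / (2 * k)!

def sinTaylor (m : ℕ) (u : ℝ) : ℝ :=
  ∑ k ∈ Finset.range m, (-1) ^ k * u ^ (2 * k + 1) / (2 * k + 1)!

lemma hasDerivAt_sinTaylor (m : ℕ) (u : ℝ) : HasDerivAt (sinTaylor m) (cosTaylor m u) u := by
  unfold sinTaylor cosTaylor
  refine HasDerivAt.fun_sum fun k _ => ?_
  refine (((hasDerivAt_pow (2 * k + 1) u).const_mul ((-1 : ℝ) ^ k)).div_const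
    ((2 * k + 1)! : ℝ)).congr_deriv ?_
  rw [Nat.factorial_succ]
  push_cast
  field_simp

lemma hasDerivAt_cosTaylor (m : ℕ) (u : ℝ) :
    HasDerivAt (cosTaylor (m + 1)) (-sinTaylor m u) u := by
  have hsplit : cosTaylor (m + 1) = fun u => (∑ k ∈ Finset.range m,
      (-1 : ℝ) ^ (k + 1) * u ^ (2 * k + 2) / (2 * k + 2)!) + 1 := by
    ext u
    simp [cosTaylor, Finset.sum_range_succ', mul_add]
  rw [hsplit, sinTaylor, ← Finset.sum_neg_distrib]
  refine (HasDerivAt.fun_sum fun k _ => ?_).add_const 1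
  refine (((hasDerivAt_pow (2 * k + 2) u).const_mul ((-1 : ℝ) ^ (k + 1))).div_const
    ((2 * k + 2)! : ℝ)).congr_deriv ?_
  rw [Nat.factorial_succ]
  push_cast
  field_simp
  ring

lemma abs_le_pow_div_factorial_of_hasDerivAt {f f' : ℝ → ℝ} {p : ℕ}
    (hf : ∀ t, HasDerivAt f (f' t) t) (h0 : f 0 = 0) (hf' : ∀ t, 0 ≤ t → |f' t| ≤ t ^ p / p !)
    {u : ℝ} (hu : 0 ≤ u) : |f u| ≤ u ^ (p + 1) / (p + 1)! := by
  have hB : ∀ t, HasDerivAt (fun t : ℝ => t ^ (p + 1) / (p + 1)!) (t ^ p / p !) t := by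
    intro t
    refine ((hasDerivAt_pow (p + 1) t).div_const ((p + 1)! : ℝ)).congr_deriv ?_
    rw [Nat.factorial_succ]
    push_cast
    field_simp
  refine image_norm_le_of_norm_deriv_right_le_deriv_boundary
    (fun t _ => (hf t).continuousAt.continuousWithinAt) (fun t _ => (hf t).hasDerivWithinAt)
    (by simp [h0]) hB (fun t ht => hf' t ht.1) ⟨hu, le_rfl⟩

lemma abs_cos_sub_cosTaylor_le (m : ℕ) {u : ℝ} (hu : 0 ≤ u) :
    |cos u - cosTaylor m u| ≤ u ^ (2 * m) / (2 * m)! := by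
  induction m generalizing u with
  | zero => simpa [cosTaylor] using abs_cos_le_one u
  | succ m ih =>
    have hsin {u : ℝ} (hu : 0 ≤ u) : |sin u - sinTaylor m u| ≤ u ^ (2 * m + 1) / (2 * m + 1)! :=
      abs_le_pow_div_factorial_of_hasDerivAt (fun t => (hasDerivAt_sin t).sub
        (hasDerivAt_sinTaylor m t)) (by simp [sinTaylor]) (fun t ht => ih ht) hu
    have h := abs_le_pow_div_factorial_of_hasDerivAt (fun t => (hasDerivAt_cos t).sub
      (hasDerivAt_cosTaylor m t)) (by simp [cosTaylor, Finset.sum_range_succ'])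
      (fun t ht => by simpa [neg_add_eq_sub, abs_sub_comm] using hsin ht) hu
    simpa [mul_add] using h

def besselJZeroTaylor (m : ℕ) (x : ℝ) : ℝ :=
  ∑ k ∈ Finset.range m, (-1) ^ k / (2 ^ k * k !) ^ 2 * x ^ (2 * k)

lemma besselJ_zero_eq_tsum (x : ℝ) :
    besselJ 0 x = ∑' k : ℕ, (-1) ^ k / (2 ^ k * k !) ^ 2 * x ^ (2 * k) := by
  refine tsum_congr fun k => ?_
  rw [add_zero, add_zero, div_pow, mul_pow, ← pow_mul, mul_comm k 2]
  ring

lemma prod_range_odd_div_even (k : ℕ) :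
    ∏ i ∈ Finset.range k, (2 * (i : ℝ) + 1) / (2 * i + 2) = (2 * k)! / (2 ^ k * k !) ^ 2 := by
  induction k with
  | zero => simp
  | succ k ih =>
    rw [Finset.prod_range_succ, ih, show 2 * (k + 1) = 2 * k + 1 + 1 by ring,
      Nat.factorial_succ, Nat.factorial_succ, Nat.factorial_succ]
    push_cast
    field_simp
    ring

lemma integral_sin_pow_even_eq_factorial_div (k : ℕ) :
    ∫ θ in 0..π, sin θ ^ (2 * k) = π * (2 * k)! / (2 ^ k * k !) ^ 2 := by
  rw [integral_sin_pow_even, prod_range_odd_div_even, mul_div_assoc]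

lemma integral_cos_series_term (x : ℝ) (k : ℕ) :
    ∫ θ in 0..π, (-1) ^ k * (x * sin θ) ^ (2 * k) / (2 * k)! =
      π * ((-1) ^ k / (2 ^ k * k !) ^ 2 * x ^ (2 * k)) := by
  simp_rw [mul_pow, mul_div_right_comm, ← mul_assoc, intervalIntegral.integral_const_mul,
    integral_sin_pow_even_eq_factorial_div]
  field_simp

lemma integral_cos_mul_sin (x : ℝ) : ∫ θ in 0..π, cos (x * sin θ) = π * besselJ 0 x := by
  have hsum : HasSum (fun k : ℕ => ∫ θ in 0..π, (-1) ^ k * (x * sin θ) ^ (2 * k) / (2 * k)!)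
      (∫ θ in 0..π, cos (x * sin θ)) := by
    refine intervalIntegral.hasSum_integral_of_dominated_convergence
      (fun k _ => |x| ^ (2 * k) / (2 * k)!) (fun k => by fun_prop) (fun k => ?_) ?_
      intervalIntegrable_const (.of_forall fun θ _ => hasSum_cos _)
    · refine .of_forall fun θ _ => ?_
      rw [norm_div, norm_mul, norm_pow, norm_neg, norm_one, one_pow, one_mul, Real.norm_natCast]
      gcongr
      rw [norm_pow, norm_mul, Real.norm_eq_abs]
      gcongr
      exact mul_le_of_le_one_right (abs_nonneg x) (abs_sin_le_one θ)
    · exact .of_forall fun _ _ =>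
        (summable_pow_div_factorial |x|).comp_injective fun a b h => by omega
  rw [besselJ_zero_eq_tsum, ← tsum_mul_left, ← hsum.tsum_eq]
  exact tsum_congr fun k => integral_cos_series_term x k

lemma continuous_besselJ_zero : Continuous (besselJ 0) := by
  have h : besselJ 0 = fun x => π⁻¹ * ∫ θ in 0..π, cos (x * sin θ) := by
    ext x
    rw [integral_cos_mul_sin, inv_mul_cancel_left₀ pi_ne_zero]
  rw [h]
  fun_prop

lemma integral_cosTaylor_mul_sin (m : ℕ) (x : ℝ) :
    ∫ θ in 0..π, cosTaylor m (x * sin θ) = π * besselJZeroTaylor m x := by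
  simp only [cosTaylor, besselJZeroTaylor, Finset.mul_sum]
  rw [intervalIntegral.integral_finsetSum fun k _ =>
    (by fun_prop : Continuous _).intervalIntegrable _ _]
  exact Finset.sum_congr rfl fun k _ => integral_cos_series_term x k

lemma abs_besselJ_zero_sub_besselJZeroTaylor_le (m : ℕ) {x : ℝ} (hx : 0 ≤ x) :
    |besselJ 0 x - besselJZeroTaylor m x| ≤ x ^ (2 * m) / (2 * m)! := by
  have hrepr : π * (besselJ 0 x - besselJZeroTaylor m x) =
      ∫ θ in 0..π, (cos (x * sin θ) - cosTaylor m (x * sin θ)) := by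
    rw [intervalIntegral.integral_sub ((by fun_prop : Continuous _).intervalIntegrable _ _)
      ((by unfold cosTaylor; fun_prop : Continuous _).intervalIntegrable _ _),
      integral_cos_mul_sin, integral_cosTaylor_mul_sin, mul_sub]
  have hbound : ∀ θ ∈ Set.uIoc 0 π,
      ‖cos (x * sin θ) - cosTaylor m (x * sin θ)‖ ≤ x ^ (2 * m) / (2 * m)! := by
    intro θ hθ
    rw [Set.uIoc_of_le pi_pos.le] at hθ
    have hsin : 0 ≤ sin θ := sin_nonneg_of_nonneg_of_le_pi hθ.1.le hθ.2
    have hxsin : 0 ≤ x * sin θ := mul_nonneg hx hsin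
    refine (abs_cos_sub_cosTaylor_le m hxsin).trans ?_
    gcongr
    exact mul_le_of_le_one_right hx (sin_le_one θ)
  have h := intervalIntegral.norm_integral_le_of_norm_le_const hbound
  rw [← hrepr, sub_zero, norm_mul, norm_eq_abs, norm_eq_abs, abs_of_pos pi_pos, mul_comm] at h
  exact le_of_mul_le_mul_right h pi_pos

section

variable {α : ℝ}

lemma integrableOn_pow_mul_exp_neg_rpow (hα : 0 < α) (m : ℕ) :
    IntegrableOn (fun t : ℝ => t ^ m * exp (-t ^ α)) (Set.Ioi 0) := by
  simpa using integrableOn_rpow_mul_exp_neg_rpow (s := m) (by linarith [m.cast_nonneg (α := ℝ)]) hα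

lemma integral_pow_mul_exp_neg_rpow (hα : 0 < α) (m : ℕ) :
    ∫ t in Set.Ioi 0, t ^ m * exp (-t ^ α) = 1 / α * Gamma ((m + 1) / α) := by
  simpa using integral_rpow_mul_exp_neg_rpow (q := m) hα (by linarith [m.cast_nonneg (α := ℝ)])

lemma besselJZeroTaylor_mul_eq_sum (m : ℕ) (r t : ℝ) :
    besselJZeroTaylor m (r * t) * t * exp (-t ^ α) =
      ∑ k ∈ Finset.range m, (-1) ^ k / (2 ^ k * k !) ^ 2 * r ^ (2 * k) *
        (t ^ (2 * k + 1) * exp (-t ^ α)) := by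
  rw [besselJZeroTaylor, Finset.sum_mul, Finset.sum_mul]
  exact Finset.sum_congr rfl fun k _ => by ring

lemma integrableOn_besselJZeroTaylor_mul (hα : 0 < α) (m : ℕ) (r : ℝ) :
    IntegrableOn (fun t => besselJZeroTaylor m (r * t) * t * exp (-t ^ α)) (Set.Ioi 0) := by
  simp_rw [besselJZeroTaylor_mul_eq_sum]
  exact integrable_finsetSum _ fun k _ =>
    (integrableOn_pow_mul_exp_neg_rpow hα (2 * k + 1)).const_mul _

lemma integral_besselJZeroTaylor_mul (hα : 0 < α) (m : ℕ) (r : ℝ) :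
    ∫ t in Set.Ioi 0, besselJZeroTaylor m (r * t) * t * exp (-t ^ α) =
      1 / α * ∑ k ∈ Finset.range m,
        (-1) ^ k * Gamma ((2 * k + 2) / α) / (2 ^ k * k !) ^ 2 * r ^ (2 * k) := by
  simp_rw [besselJZeroTaylor_mul_eq_sum]
  rw [integral_finsetSum _ fun k _ =>
    (integrableOn_pow_mul_exp_neg_rpow hα (2 * k + 1)).const_mul _, Finset.mul_sum]
  refine Finset.sum_congr rfl fun k _ => ?_
  rw [integral_const_mul, integral_pow_mul_exp_neg_rpow hα]
  push_cast
  rw [add_assoc, one_add_one_eq_two]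
  ring

lemma norm_besselJ_zero_sub_besselJZeroTaylor_mul_le (m : ℕ) {r t : ℝ} (hr : 0 ≤ r)
    (ht : 0 ≤ t) :
    ‖(besselJ 0 (r * t) - besselJZeroTaylor m (r * t)) * t * exp (-t ^ α)‖ ≤
      r ^ (2 * m) / (2 * m)! * (t ^ (2 * m + 1) * exp (-t ^ α)) := by
  rw [norm_mul, norm_mul, norm_eq_abs, norm_of_nonneg ht, norm_of_nonneg (exp_pos _).le]
  calc |besselJ 0 (r * t) - besselJZeroTaylor m (r * t)| * t * exp (-t ^ α)
      ≤ (r * t) ^ (2 * m) / (2 * m)! * t * exp (-t ^ α) := by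
        gcongr
        exact abs_besselJ_zero_sub_besselJZeroTaylor_le m (mul_nonneg hr ht)
    _ = r ^ (2 * m) / (2 * m)! * (t ^ (2 * m + 1) * exp (-t ^ α)) := by ring

lemma integrableOn_besselJ_zero_sub_besselJZeroTaylor_mul (hα : 0 < α) (m : ℕ) {r : ℝ}
    (hr : 0 ≤ r) :
    IntegrableOn (fun t => (besselJ 0 (r * t) - besselJZeroTaylor m (r * t)) * t * exp (-t ^ α))
      (Set.Ioi 0) := by
  have hJ : Measurable (besselJ 0) := continuous_besselJ_zero.measurable
  refine ((integrableOn_pow_mul_exp_neg_rpow hα (2 * m + 1)).const_mul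
    (r ^ (2 * m) / (2 * m)!)).mono'
    (by unfold besselJZeroTaylor; fun_prop) ?_
  filter_upwards [ae_restrict_mem measurableSet_Ioi] with t ht
  exact norm_besselJ_zero_sub_besselJZeroTaylor_mul_le m hr (le_of_lt ht)

lemma abs_integral_besselJ_zero_sub_besselJZeroTaylor_mul_le (hα : 0 < α) (m : ℕ) {r : ℝ}
    (hr : 0 ≤ r) :
    |∫ t in Set.Ioi 0, (besselJ 0 (r * t) - besselJZeroTaylor m (r * t)) * t * exp (-t ^ α)| ≤
      r ^ (2 * m) / (2 * m)! * (1 / α * Gamma ((2 * m + 2) / α)) := by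
  rw [← norm_eq_abs]
  refine (norm_integral_le_of_norm_le
    ((integrableOn_pow_mul_exp_neg_rpow hα (2 * m + 1)).const_mul (r ^ (2 * m) / (2 * m)!))
    ?_).trans_eq ?_
  · filter_upwards [ae_restrict_mem measurableSet_Ioi] with t ht
    exact norm_besselJ_zero_sub_besselJZeroTaylor_mul_le m hr (le_of_lt ht)
  · rw [integral_const_mul, integral_pow_mul_exp_neg_rpow hα]
    push_cast
    rw [add_assoc, one_add_one_eq_two]

lemma bivariateStablePdf_eq_add_integral (hα : 0 < α) (m : ℕ) {r : ℝ} (hr : 0 ≤ r) :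
    bivariateStablePdf r α = 1 / (2 * π) * (1 / α * ∑ k ∈ Finset.range m,
        (-1) ^ k * Gamma ((2 * k + 2) / α) / (2 ^ k * k !) ^ 2 * r ^ (2 * k) +
      ∫ t in Set.Ioi 0, (besselJ 0 (r * t) - besselJZeroTaylor m (r * t)) * t * exp (-t ^ α)) := by
  rw [bivariateStablePdf, ← integral_besselJZeroTaylor_mul hα, ← integral_add
    (integrableOn_besselJZeroTaylor_mul hα m r)
    (integrableOn_besselJ_zero_sub_besselJZeroTaylor_mul hα m hr)]
  congr 1
  exact integral_congr_ae (.of_forall fun t => by ring)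

end

/-- Expansion of the bivariate α-stable radial density at the origin with remainder bound:
`f(r;α) = (1/(2πα)) Σ_{k=0}^{n} (−1)^k Γ((2k+2)/α)/((2^k k!)²) r^{2k} + R(r;α)` with
`|R(r;α)| ≤ Γ((2n+4)/α)/(2πα (2n+2)!) r^{2n+2}` for all `r ≥ 0`. -/
theorem bivariateStablePdf_taylor_expansion (α : ℝ) (hα : α ∈ Set.Ioo (0:ℝ) 2) (n : ℕ) :
    ∀ r : ℝ, 0 ≤ r →
      |bivariateStablePdf r α - (1 / (2 * π * α)) * ∑ k ∈ Finset.range (n + 1),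
          (-1 : ℝ) ^ k * Real.Gamma ((2 * k + 2) / α) / ((2 ^ k * Nat.factorial k) ^ 2)
            * r ^ (2 * k)|
        ≤ Real.Gamma ((2 * n + 4) / α) / (2 * π * α * Nat.factorial (2 * n + 2))
            * r ^ (2 * n + 2) := by
  intro r hr
  rw [bivariateStablePdf_eq_add_integral hα.1 (n + 1) hr]
  set I := ∫ t in Set.Ioi 0,
    (besselJ 0 (r * t) - besselJZeroTaylor (n + 1) (r * t)) * t * exp (-t ^ α)
  have hrem : |I| ≤ _ := abs_integral_besselJ_zero_sub_besselJZeroTaylor_mul_le hα.1 (n + 1) hr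
  calc _ = |1 / (2 * π) * I| := by
        congr 1
        ring
    _ = 1 / (2 * π) * |I| := by rw [abs_mul, abs_of_pos (by positivity)]
    _ ≤ _ := by
        refine (mul_le_mul_of_nonneg_left hrem (by positivity)).trans_eq ?_
        rw [show 2 * (n + 1) = 2 * n + 2 by ring]
        push_cast
        rw [show 2 * ((n : ℝ) + 1) + 2 = 2 * n + 4 by ring]
        ring
end
end

section
/- For ℓ₁, ℓ₂ ∈ ℕ, α ∈ (0,2) and r ≥ 0, the mixed partial derivative of the symmetric α-stable density satisfies |∂^{ℓ₁+ℓ₂} f/(∂r^{ℓ₁} ∂α^{ℓ₂})(r;α)| ≤ (1/(π α^{ℓ₂+1})) ∫₀^∞ |log t|^{ℓ₂} t^{(ℓ₁+1)/α − 1} |p_{ℓ₂}(t)| e^{−t} dt, where p_{ℓ₂} is the polynomial of degree ℓ₂ defined by ∂^{ℓ₂}/∂α^{ℓ₂} [e^{−t^α}] = (log t)^{ℓ₂} p_{ℓ₂}(t^α) e^{−t^α} (with p₀ ≡ 1); in particular the right-hand side is finite. -/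
/-!
Differentiating under the integral sign, `∂ᵣ^ℓ₁` turns `cos (r t)` into
`t ^ ℓ₁ cos (r t + ℓ₁ π / 2)` and `∂_α^ℓ₂` turns `exp (-t ^ α)` into
`(log t) ^ ℓ₂ p(t ^ α) exp (-t ^ α)`. Domination on a neighbourhood of `α` comes from
`|p(u)| e^{-u} ≤ C e^{-u/2}` and `|log t| ^ k ≤ C (t ^ ε + t ^ (-ε))`. Bounding `|cos| ≤ 1` and
substituting `t ↦ t ^ α` in the resulting integral gives the bound, and the same substitution
shows that its right-hand side is finite.
-/

open MeasureTheory Real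

/-- The unit-scale symmetric α-stable density `f(r;α) = (1/π)∫₀^∞ cos(rt) e^{-t^α} dt`. -/
noncomputable def stablePdf (r α : ℝ) : ℝ :=
  (1 / π) * ∫ t in Set.Ioi (0:ℝ), Real.cos (r * t) * Real.exp (-(t ^ α))

section
open Set Filter Polynomial
open scoped Nat

theorem Polynomial.exists_abs_eval_le_mul_exp_half (q : ℝ[X]) :
    ∃ C, ∀ u, 0 ≤ u → |q.eval u| ≤ C * exp (u / 2) := by
  refine ⟨∑ i ∈ Finset.range (q.natDegree + 1), |q.coeff i| * (2 ^ i * i !), fun u hu => ?_⟩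
  rw [q.eval_eq_sum_range, Finset.sum_mul]
  refine (Finset.abs_sum_le_sum_abs _ _).trans (Finset.sum_le_sum fun i _ => ?_)
  have hpow : u ^ i ≤ 2 ^ i * i ! * exp (u / 2) := by
    have h := pow_div_factorial_le_exp (x := u / 2) (by positivity) i
    rw [div_pow, div_div, div_le_iff₀ (by positivity)] at h
    linarith
  rw [abs_mul, abs_pow, abs_of_nonneg hu, mul_assoc]
  exact mul_le_mul_of_nonneg_left hpow (abs_nonneg _)

/-- Uniform in `β ≥ a` because `t ^ a ≤ 1 + t ^ β` for all `t > 0`. -/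
theorem Polynomial.exists_abs_eval_rpow_mul_exp_neg_rpow_le (q : ℝ[X]) {a : ℝ} (ha : 0 ≤ a) :
    ∃ C, ∀ t, 0 < t → ∀ β, a ≤ β →
      |q.eval (t ^ β)| * exp (-(t ^ β)) ≤ C * exp (-(1 / 2) * t ^ a) := by
  obtain ⟨C, hC⟩ := q.exists_abs_eval_le_mul_exp_half
  refine ⟨C * exp (1 / 2), fun t ht β hβ => ?_⟩
  have hta : t ^ a ≤ 1 + t ^ β := by
    rcases le_total t 1 with h | h
    · linarith [rpow_le_one ht.le h ha, rpow_nonneg ht.le β]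
    · linarith [rpow_le_rpow_of_exponent_le h hβ]
  have hC0 : 0 ≤ C := by
    have := (abs_nonneg _).trans (hC 0 le_rfl)
    exact nonneg_of_mul_nonneg_left this (exp_pos _)
  calc |q.eval (t ^ β)| * exp (-(t ^ β))
      ≤ C * exp (t ^ β / 2) * exp (-(t ^ β)) :=
        mul_le_mul_of_nonneg_right (hC _ (rpow_nonneg ht.le β)) (exp_pos _).le
    _ = C * exp (-(t ^ β / 2)) := by rw [mul_assoc, ← exp_add]; ring_nf
    _ ≤ C * exp (1 / 2) * exp (-(1 / 2) * t ^ a) := by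
        rw [mul_assoc, ← exp_add]
        gcongr
        linarith

theorem pow_log_le_mul_rpow {y ε : ℝ} (hy : 1 ≤ y) (hε : 0 < ε) (k : ℕ) :
    log y ^ k ≤ (k / ε) ^ k * y ^ ε := by
  rcases k.eq_zero_or_pos with rfl | hk
  · simpa using one_le_rpow hy hε.le
  · have hδ : 0 < ε / k := by positivity
    calc log y ^ k ≤ (y ^ (ε / k) / (ε / k)) ^ k :=
          pow_le_pow_left₀ (log_nonneg hy) (log_le_rpow_div (by linarith) hδ) k
      _ = (k / ε) ^ k * y ^ ε := by
          rw [div_pow, ← rpow_natCast (y ^ _), ← rpow_mul (by linarith),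
            div_mul_cancel₀ _ (by positivity), div_eq_mul_inv, ← inv_pow, inv_div, mul_comm]

theorem abs_log_pow_le {x ε : ℝ} (hx : 0 < x) (hε : 0 < ε) (k : ℕ) :
    |log x| ^ k ≤ (k / ε) ^ k * (x ^ ε + x ^ (-ε)) := by
  have hpos : 0 ≤ (k / ε : ℝ) ^ k := by positivity
  rcases le_total 1 x with h | h
  · rw [abs_of_nonneg (log_nonneg h)]
    nlinarith [pow_log_le_mul_rpow h hε k, rpow_nonneg hx.le (-ε)]
  · rw [abs_of_nonpos (log_nonpos hx.le h), ← log_inv]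
    have := pow_log_le_mul_rpow (one_le_inv₀ hx |>.2 h) hε k
    rw [inv_rpow hx.le, ← rpow_neg hx.le] at this
    nlinarith [rpow_nonneg hx.le ε]

theorem integrableOn_abs_log_pow_mul_rpow_mul_exp_neg_mul_rpow (k : ℕ) {σ a c : ℝ}
    (hσ : -1 < σ) (ha : 0 < a) (hc : 0 < c) :
    IntegrableOn (fun x => |log x| ^ k * x ^ σ * exp (-c * x ^ a)) (Ioi 0) := by
  set ε := (σ + 1) / 2 with hε_def
  have hε : 0 < ε := by linarith
  have hint := ((integrableOn_rpow_mul_exp_neg_mul_rpow (s := σ + ε) (by linarith) ha hc).add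
    (integrableOn_rpow_mul_exp_neg_mul_rpow (s := σ - ε) (by linarith) ha hc)).const_mul
    ((k / ε) ^ k)
  refine hint.mono' (by fun_prop) ((ae_restrict_iff' measurableSet_Ioi).2
    (Eventually.of_forall fun x (hx : 0 < x) => ?_))
  rw [norm_of_nonneg (by positivity), Pi.add_apply, rpow_add hx, rpow_sub hx]
  calc |log x| ^ k * x ^ σ * exp (-c * x ^ a)
      ≤ (k / ε) ^ k * (x ^ ε + x ^ (-ε)) * x ^ σ * exp (-c * x ^ a) := by
        gcongr; exact abs_log_pow_le hx hε k
    _ = _ := by rw [rpow_neg hx.le]; field_simp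

theorem Polynomial.integrableOn_abs_log_pow_mul_rpow_mul_abs_eval_rpow_mul_exp_neg_rpow
    (q : ℝ[X]) (k : ℕ) {σ a : ℝ} (hσ : -1 < σ) (ha : 0 < a) :
    IntegrableOn (fun x => |log x| ^ k * x ^ σ * (|q.eval (x ^ a)| * exp (-(x ^ a)))) (Ioi 0) := by
  obtain ⟨C, hC⟩ := q.exists_abs_eval_rpow_mul_exp_neg_rpow_le ha.le
  refine ((integrableOn_abs_log_pow_mul_rpow_mul_exp_neg_mul_rpow k hσ ha one_half_pos).const_mul
    C).mono' (by fun_prop) ((ae_restrict_iff' measurableSet_Ioi).2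
      (Eventually.of_forall fun x (hx : 0 < x) => ?_))
  rw [norm_of_nonneg (by positivity)]
  calc |log x| ^ k * x ^ σ * (|q.eval (x ^ a)| * exp (-(x ^ a)))
      ≤ |log x| ^ k * x ^ σ * (C * exp (-(1 / 2) * x ^ a)) :=
        mul_le_mul_of_nonneg_left (hC x hx a le_rfl) (by positivity)
    _ = _ := by ring

/-- The polynomial `p_k` of the statement: differentiating `(log t) ^ k p_k(t ^ β) exp (-t ^ β)`
in `β` gives the recursion. -/
noncomputable def expNegRpowDerivPoly : ℕ → ℝ[X]
  | 0 => 1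
  | k + 1 => X * (derivative (expNegRpowDerivPoly k) - expNegRpowDerivPoly k)

theorem hasDerivAt_log_pow_mul_expNegRpowDerivPoly (k : ℕ) {t : ℝ} (ht : 0 < t) (β : ℝ) :
    HasDerivAt (fun b : ℝ => log t ^ k * (expNegRpowDerivPoly k).eval (t ^ b) * exp (-(t ^ b)))
      (log t ^ (k + 1) * (expNegRpowDerivPoly (k + 1)).eval (t ^ β) * exp (-(t ^ β))) β := by
  have hpow : HasDerivAt (fun b => t ^ b) (t ^ β * log t) β :=
    (hasStrictDerivAt_const_rpow ht β).hasDerivAt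
  have hpoly := ((expNegRpowDerivPoly k).hasDerivAt (t ^ β)).comp β hpow
  have hexp := (hasDerivAt_exp _).comp β hpow.neg
  refine ((hpoly.const_mul (log t ^ k)).mul hexp).congr_deriv ?_
  simp only [expNegRpowDerivPoly, eval_mul, eval_sub, eval_X, Function.comp_apply, Pi.neg_apply]
  ring

theorem iteratedDeriv_exp_neg_rpow (k : ℕ) {t : ℝ} (ht : 0 < t) :
    iteratedDeriv k (fun b : ℝ => exp (-(t ^ b)))
      = fun β => log t ^ k * (expNegRpowDerivPoly k).eval (t ^ β) * exp (-(t ^ β)) := by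
  induction k with
  | zero => simp [expNegRpowDerivPoly]
  | succ k ih =>
    funext β
    rw [iteratedDeriv_succ, ih, (hasDerivAt_log_pow_mul_expNegRpowDerivPoly k ht β).deriv]

theorem eq_expNegRpowDerivPoly {k : ℕ} {p : ℝ[X]}
    (hp : ∀ t, 1 < t →
      iteratedDeriv k (fun b : ℝ => exp (-(t ^ b))) 1 = log t ^ k * p.eval t * exp (-t)) :
    p = expNegRpowDerivPoly k := by
  refine eq_of_infinite_eval_eq _ _ ((Ioi_infinite 1).mono fun t (ht : 1 < t) => ?_)
  have h := hp t ht
  rw [iteratedDeriv_exp_neg_rpow k (one_pos.trans ht)] at h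
  simp only [rpow_one] at h
  exact (mul_left_cancel₀ (pow_ne_zero k (log_pos ht).ne')
    (mul_right_cancel₀ (exp_ne_zero _) h)).symm

theorem iteratedDeriv_integral_of_dominated {X E : Type*} [MeasurableSpace X] {μ : Measure X}
    [NormedAddCommGroup E] [NormedSpace ℝ E] [CompleteSpace E]
    {F : ℕ → ℝ → X → E} {s : Set ℝ} (hs : IsOpen s) {n : ℕ}
    (hF_meas : ∀ k ≤ n, ∀ x ∈ s, AEStronglyMeasurable (F k x) μ)
    (h_bound : ∀ k ≤ n, ∃ bound : X → ℝ, Integrable bound μ ∧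
      ∀ᵐ a ∂μ, ∀ x ∈ s, ‖F k x a‖ ≤ bound a)
    (h_diff : ∀ k < n, ∀ᵐ a ∂μ, ∀ x ∈ s, HasDerivAt (F k · a) (F (k + 1) x a) x)
    {x : ℝ} (hx : x ∈ s) :
    iteratedDeriv n (fun y => ∫ a, F 0 y a ∂μ) x = ∫ a, F n x a ∂μ := by
  have hF_int : ∀ k ≤ n, ∀ x ∈ s, Integrable (F k x) μ := fun k hk x hx => by
    obtain ⟨bound, hbound_int, hbound⟩ := h_bound k hk
    exact hbound_int.mono' (hF_meas k hk x hx) (hbound.mono fun a ha => ha x hx)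
  have hderiv : ∀ k < n, ∀ x ∈ s,
      HasDerivAt (fun y => ∫ a, F k y a ∂μ) (∫ a, F (k + 1) x a ∂μ) x := fun k hk x hx => by
    obtain ⟨bound, hbound_int, hbound⟩ := h_bound (k + 1) hk
    exact (hasDerivAt_integral_of_dominated_loc_of_deriv_le (hs.mem_nhds hx)
      (eventually_of_mem (hs.mem_nhds hx) (hF_meas k hk.le)) (hF_int k hk.le x hx)
      (hF_meas (k + 1) hk x hx) hbound hbound_int (h_diff k hk)).2
  suffices ∀ m ≤ n, ∀ x ∈ s, iteratedDeriv m (fun y => ∫ a, F 0 y a ∂μ) x = ∫ a, F m x a ∂μ from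
    this n le_rfl x hx
  intro m
  induction m with
  | zero => simp
  | succ m ih =>
    intro hm x hx
    rw [iteratedDeriv_succ, ((hderiv m hm x hx).congr_of_eventuallyEq
      (eventually_of_mem (hs.mem_nhds hx) fun y hy => ih (by omega) y hy)).deriv]

theorem iteratedDeriv_stablePdf (n : ℕ) {β : ℝ} (hβ : 0 < β) (r : ℝ) :
    iteratedDeriv n (fun s => stablePdf s β) r
      = (1 / π) * ∫ t in Ioi 0, cos (r * t + n * (π / 2)) * t ^ n * exp (-(t ^ β)) := by
  set F : ℕ → ℝ → ℝ → ℝ := fun k y t => cos (y * t + k * (π / 2)) * t ^ k * exp (-(t ^ β))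
  have hF₀ : (fun s => stablePdf s β) = fun s => (1 / π) * ∫ t in Ioi 0, F 0 s t := by
    funext s; simp [stablePdf, F]
  rw [hF₀, iteratedDeriv_const_mul_field]
  congr 1
  refine iteratedDeriv_integral_of_dominated isOpen_univ (fun k _ y _ => by fun_prop)
    (fun k _ => ⟨_, integrableOn_abs_log_pow_mul_rpow_mul_exp_neg_mul_rpow 0
      (σ := k) (c := 1) (neg_one_lt_zero.trans_le k.cast_nonneg) hβ one_pos, ?_⟩)
    (fun k _ => ?_) (mem_univ r)
  · refine (ae_restrict_iff' measurableSet_Ioi).2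
      (Eventually.of_forall fun t (ht : 0 < t) y _ => ?_)
    rw [norm_mul, norm_mul, norm_of_nonneg (exp_pos _).le, norm_pow, norm_of_nonneg ht.le,
      ← rpow_natCast]
    simpa using mul_le_mul_of_nonneg_right
      (mul_le_of_le_one_left (by positivity) (abs_cos_le_one _)) (exp_pos _).le
  · refine Eventually.of_forall fun t y _ => ?_
    have hcos := ((hasDerivAt_id y).mul_const t |>.add_const (k * (π / 2))).cos
    refine ((hcos.mul_const (t ^ k)).mul_const (exp (-(t ^ β)))).congr_deriv ?_
    simp only [F, Nat.cast_succ, add_mul, ← add_assoc, cos_add_pi_div_two, id, one_mul, pow_succ]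
    ring

theorem abs_cos_mul_pow_mul_log_pow_mul_eval_mul_exp_le (θ : ℝ) {t : ℝ} (ht : 0 < t)
    (m k : ℕ) (q : ℝ[X]) (u : ℝ) :
    |cos θ * t ^ m * (log t ^ k * q.eval u * exp (-u))|
      ≤ |log t| ^ k * t ^ (m : ℝ) * |q.eval u| * exp (-u) := by
  rw [abs_mul, abs_mul, abs_mul, abs_mul, abs_pow, abs_pow, abs_of_pos ht, abs_of_pos (exp_pos _),
    rpow_natCast]
  calc |cos θ| * t ^ m * (|log t| ^ k * |q.eval u| * exp (-u))
      = |cos θ| * (|log t| ^ k * t ^ m * (|q.eval u| * exp (-u))) := by ring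
    _ ≤ 1 * (|log t| ^ k * t ^ m * (|q.eval u| * exp (-u))) := by
        gcongr; exact abs_cos_le_one θ
    _ = _ := by ring

theorem iteratedDeriv_iteratedDeriv_stablePdf (m n : ℕ) {α : ℝ} (hα : 0 < α) (r : ℝ) :
    iteratedDeriv n (fun b => iteratedDeriv m (fun s => stablePdf s b) r) α
      = (1 / π) * ∫ t in Ioi 0, cos (r * t + m * (π / 2)) * t ^ m *
          (log t ^ n * (expNegRpowDerivPoly n).eval (t ^ α) * exp (-(t ^ α))) := by
  set F : ℕ → ℝ → ℝ → ℝ := fun k b t => cos (r * t + m * (π / 2)) * t ^ m *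
    (log t ^ k * (expNegRpowDerivPoly k).eval (t ^ b) * exp (-(t ^ b)))
  have hα' : α ∈ Ioi (α / 2) := half_lt_self hα
  have hF₀ : EqOn (fun b => iteratedDeriv m (fun s => stablePdf s b) r)
      (fun b => (1 / π) * ∫ t in Ioi 0, F 0 b t) (Ioi (α / 2)) := fun b (hb : α / 2 < b) => by
    simp [iteratedDeriv_stablePdf m ((half_pos hα).trans hb), F, expNegRpowDerivPoly, mul_assoc]
  rw [hF₀.iteratedDeriv_of_isOpen isOpen_Ioi n hα', iteratedDeriv_const_mul_field]
  congr 1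
  refine iteratedDeriv_integral_of_dominated isOpen_Ioi (fun k _ b _ => by fun_prop)
    (fun k _ => ?_) (fun k _ => ?_) hα'
  · obtain ⟨C, hC⟩ := (expNegRpowDerivPoly k).exists_abs_eval_rpow_mul_exp_neg_rpow_le
      (half_pos hα).le
    refine ⟨_, (integrableOn_abs_log_pow_mul_rpow_mul_exp_neg_mul_rpow k (σ := m)
      (neg_one_lt_zero.trans_le m.cast_nonneg) (half_pos hα) one_half_pos).const_mul C, ?_⟩
    refine (ae_restrict_iff' measurableSet_Ioi).2
      (Eventually.of_forall fun t (ht : 0 < t) b (hb : α / 2 < b) => ?_)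
    calc _ ≤ |log t| ^ k * t ^ (m : ℝ) *
          |(expNegRpowDerivPoly k).eval (t ^ b)| * exp (-(t ^ b)) :=
          abs_cos_mul_pow_mul_log_pow_mul_eval_mul_exp_le _ ht m k _ _
      _ ≤ |log t| ^ k * t ^ (m : ℝ) * (C * exp (-(1 / 2) * t ^ (α / 2))) := by
          rw [mul_assoc]
          exact mul_le_mul_of_nonneg_left (hC t ht b hb.le) (by positivity)
      _ = _ := by ring
  · refine (ae_restrict_iff' measurableSet_Ioi).2
      (Eventually.of_forall fun t (ht : 0 < t) b _ => ?_)
    exact (hasDerivAt_log_pow_mul_expNegRpowDerivPoly k ht b).const_mul _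

theorem integrableOn_and_integral_eq_of_comp_rpow {α : ℝ} (hα : 0 < α) (n : ℕ) (σ : ℝ)
    {h : ℝ → ℝ} (hg : IntegrableOn (fun x => |log x| ^ n * x ^ σ * h (x ^ α)) (Ioi 0)) :
    IntegrableOn (fun t => |log t| ^ n * t ^ ((σ + 1) / α - 1) * h t) (Ioi 0) ∧
      ∫ t in Ioi 0, |log t| ^ n * t ^ ((σ + 1) / α - 1) * h t
        = α ^ (n + 1) * ∫ x in Ioi 0, |log x| ^ n * x ^ σ * h (x ^ α) := by
  set f := fun t => |log t| ^ n * t ^ ((σ + 1) / α - 1) * h t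
  have hsubst : EqOn (fun x => (|α| * x ^ (α - 1)) • f (x ^ α))
      (fun x => α ^ (n + 1) * (|log x| ^ n * x ^ σ * h (x ^ α))) (Ioi 0) :=
    fun x (hx : 0 < x) => by
      have hpow : x ^ (α - 1) * (x ^ α) ^ ((σ + 1) / α - 1) = x ^ σ := by
        rw [← rpow_mul hx.le, ← rpow_add hx]
        congr 1
        field_simp
        ring
      simp only [f, smul_eq_mul, log_rpow hx, abs_mul, abs_of_pos hα, mul_pow]
      linear_combination α ^ (n + 1) * |log x| ^ n * h (x ^ α) * hpow
  constructor
  · exact (integrableOn_Ioi_comp_rpow_iff f hα.ne').1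
      (IntegrableOn.congr_fun (hg.const_mul _) hsubst.symm measurableSet_Ioi)
  · rw [← integral_comp_rpow_Ioi f hα.ne', setIntegral_congr_fun measurableSet_Ioi hsubst,
      integral_const_mul]

end

theorem stablePdf_mixed_deriv_bound_general (ℓ₁ ℓ₂ : ℕ) (α : ℝ) (hα : α ∈ Set.Ioo (0:ℝ) 2)
    (r : ℝ) (p : Polynomial ℝ)
    (hp : ∀ t : ℝ, 0 < t → ∀ β : ℝ, 0 < β →
      iteratedDeriv ℓ₂ (fun b => Real.exp (-(t ^ b))) β
        = Real.log t ^ ℓ₂ * p.eval (t ^ β) * Real.exp (-(t ^ β))) :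
    IntegrableOn (fun t : ℝ =>
        |Real.log t| ^ ℓ₂ * t ^ ((ℓ₁ + 1) / α - 1) * |p.eval t| * Real.exp (-t))
      (Set.Ioi (0:ℝ))
    ∧ |iteratedDeriv ℓ₂ (fun b => iteratedDeriv ℓ₁ (fun s => stablePdf s b) r) α|
      ≤ (1 / (π * α ^ (ℓ₂ + 1))) * ∫ t in Set.Ioi (0:ℝ),
          |Real.log t| ^ ℓ₂ * t ^ ((ℓ₁ + 1) / α - 1) * |p.eval t| * Real.exp (-t) := by
  have hα₀ : 0 < α := hα.1
  obtain rfl : p = expNegRpowDerivPoly ℓ₂ :=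
    eq_expNegRpowDerivPoly fun t ht => by simpa using hp t (one_pos.trans ht) 1 one_pos
  have hg := Polynomial.integrableOn_abs_log_pow_mul_rpow_mul_abs_eval_rpow_mul_exp_neg_rpow
    (expNegRpowDerivPoly ℓ₂) ℓ₂ (σ := ℓ₁) (neg_one_lt_zero.trans_le ℓ₁.cast_nonneg) hα₀
  obtain ⟨hint, heq⟩ := integrableOn_and_integral_eq_of_comp_rpow hα₀ ℓ₂ ℓ₁
    (h := fun u => |(expNegRpowDerivPoly ℓ₂).eval u| * exp (-u)) hg
  simp only [← mul_assoc] at hg hint heq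
  refine ⟨hint, ?_⟩
  rw [iteratedDeriv_iteratedDeriv_stablePdf ℓ₁ ℓ₂ hα₀ r, heq, abs_mul, one_div, one_div, mul_inv,
    mul_assoc, inv_mul_cancel_left₀ (by positivity), abs_of_pos (by positivity), ← norm_eq_abs]
  refine mul_le_mul_of_nonneg_left (norm_integral_le_of_norm_le hg ?_) (by positivity)
  exact (ae_restrict_iff' measurableSet_Ioi).2 (Filter.Eventually.of_forall fun t (ht : 0 < t) =>
    abs_cos_mul_pow_mul_log_pow_mul_eval_mul_exp_le _ ht ℓ₁ ℓ₂ _ _)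

/-- Bound for the mixed partial derivatives of the symmetric α-stable density: if `p` is the
polynomial of degree `ℓ₂` with `∂^{ℓ₂}/∂α^{ℓ₂}[e^{−t^α}] = (log t)^{ℓ₂} p(t^α) e^{−t^α}`
(`p ≡ 1` for `ℓ₂ = 0`), then for `α ∈ (0,2)` and `r ≥ 0`,
`|∂^{ℓ₁+ℓ₂} f/(∂r^{ℓ₁}∂α^{ℓ₂})(r;α)| ≤ (1/(π α^{ℓ₂+1})) ∫₀^∞ |log t|^{ℓ₂} t^{(ℓ₁+1)/α−1}`
`· |p(t)| e^{−t} dt`, and in particular this integral is finite. -/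
theorem stablePdf_mixed_deriv_bound (ℓ₁ ℓ₂ : ℕ) (α : ℝ) (hα : α ∈ Set.Ioo (0:ℝ) 2)
    (r : ℝ) (hr : 0 ≤ r) (p : Polynomial ℝ) (hdeg : p.natDegree = ℓ₂)
    (hp : ∀ t : ℝ, 0 < t → ∀ β : ℝ, 0 < β →
      iteratedDeriv ℓ₂ (fun b => Real.exp (-(t ^ b))) β
        = Real.log t ^ ℓ₂ * p.eval (t ^ β) * Real.exp (-(t ^ β))) :
    IntegrableOn (fun t : ℝ =>
        |Real.log t| ^ ℓ₂ * t ^ ((ℓ₁ + 1) / α - 1) * |p.eval t| * Real.exp (-t))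
      (Set.Ioi (0:ℝ))
    ∧ |iteratedDeriv ℓ₂ (fun b => iteratedDeriv ℓ₁ (fun s => stablePdf s b) r) α|
      ≤ (1 / (π * α ^ (ℓ₂ + 1))) * ∫ t in Set.Ioi (0:ℝ),
          |Real.log t| ^ ℓ₂ * t ^ ((ℓ₁ + 1) / α - 1) * |p.eval t| * Real.exp (-t) :=
  stablePdf_mixed_deriv_bound_general ℓ₁ ℓ₂ α hα r p hp
end
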